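/- Let K be a field of characteristic zero and X a rank-two irreducible locally nilpotent K-derivation of K[x,y,z]. Write K[x,y,z]^X = K[u,p] where u is a coordinate of K[x,y,z], let s be a minimal local slice of X with X(s) = c(u), let ℓ be a polynomial in one variable with coefficients in K[u], and set v = s + ℓ(u,p). If u, v is a system of coordinates of K[x,y,z], then there exist w ∈ K[x,y,z] and Q ∈ K[u,v] such that p + Q(u,v) = c(u)·w, the triple u,v,w is a coordinate system of K[x,y,z], and X(u) = 0, X(v) = c(u), X(w) = ∂_v Q(u,v); in particular X is triangulable. -/

import Mathlib

noncomputable section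

variable (K : Type) [Field K] [CharZero K]

abbrev PolyR (K : Type) [Field K] : Type := MvPolynomial (Fin 3) K

/-- A derivation is locally nilpotent if every element is killed by some iterate. -/
def LND (X : Derivation K (PolyR K) (PolyR K)) : Prop :=
  ∀ a : PolyR K, ∃ n : ℕ, 0 < n ∧ (⇑X)^[n] a = 0

/-- `X` is irreducible: every common divisor of `X x, X y, X z` is a unit. -/
def IrredDer (X : Derivation K (PolyR K) (PolyR K)) : Prop :=
  ∀ d : PolyR K, (∀ i : Fin 3, d ∣ X (MvPolynomial.X i)) → IsUnit d

def IsCoord (f : PolyR K) : Prop :=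
  ∃ g h : PolyR K, Algebra.adjoin K {f, g, h} = ⊤

def IsCoordSys (u v w : PolyR K) : Prop := Algebra.adjoin K {u, v, w} = ⊤

def IsSysOfCoords2 (u v : PolyR K) : Prop :=
  ∃ w : PolyR K, Algebra.adjoin K {u, v, w} = ⊤

/-- The corank of a derivation: the largest length of a system of coordinates in the kernel. -/
def corank (X : Derivation K (PolyR K) (PolyR K)) : ℕ :=
  sSup {r : ℕ | ∃ l : List (PolyR K), l.length = r ∧ (∀ f ∈ l, X f = 0) ∧
    ∃ m : List (PolyR K), (l ++ m).length = 3 ∧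
      Algebra.adjoin K {a : PolyR K | a ∈ l ++ m} = ⊤}

def rankD (X : Derivation K (PolyR K) (PolyR K)) : ℕ := 3 - corank K X

def IsLocalSlice (X : Derivation K (PolyR K) (PolyR K)) (s : PolyR K) : Prop :=
  X s ≠ 0 ∧ X (X s) = 0

def IsMinLocalSlice (X : Derivation K (PolyR K) (PolyR K)) (s : PolyR K) : Prop :=
  IsLocalSlice K X s ∧ ∀ v : PolyR K, IsLocalSlice K X v → X v ∣ X s →
    ∃ μ : (PolyR K)ˣ, X v = (μ : PolyR K) * X s

/-- `c` generates the plinth ideal `S^X = {X a : X² a = 0}` as an ideal of the constants. -/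
def IsPlinthGen (X : Derivation K (PolyR K) (PolyR K)) (c : PolyR K) : Prop :=
  {d : PolyR K | ∃ a : PolyR K, X a = d ∧ X (X a) = 0} =
    {d : PolyR K | ∃ r : PolyR K, X r = 0 ∧ d = r * c}

/-- `X` is triangulable: triangular in some coordinate system. -/
def Triangulable (X : Derivation K (PolyR K) (PolyR K)) : Prop :=
  ∃ u v w : PolyR K, IsCoordSys K u v w ∧
    X u ∈ (⊥ : Subalgebra K (PolyR K)) ∧
    X v ∈ Algebra.adjoin K {u} ∧
    X w ∈ Algebra.adjoin K {u, v}

/-- Evaluation of `Q ∈ K[u][T]` at `T = t`, with coefficients evaluated at `u`. -/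
def ev2 (u t : PolyR K) (Q : Polynomial (Polynomial K)) : PolyR K :=
  Polynomial.eval₂ (Polynomial.aeval u).toRingHom t Q

/-- The Jacobian derivation `Jac(f,g,·)` applied to `h`. -/
def jacDet (f g h : PolyR K) : PolyR K :=
  Matrix.det !![MvPolynomial.pderiv 0 f, MvPolynomial.pderiv 1 f, MvPolynomial.pderiv 2 f;
    MvPolynomial.pderiv 0 g, MvPolynomial.pderiv 1 g, MvPolynomial.pderiv 2 g;
    MvPolynomial.pderiv 0 h, MvPolynomial.pderiv 1 h, MvPolynomial.pderiv 2 h]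

/-!
Complete `u` and `v = s + ℓ(u,p)` to a coordinate system `u, v, t`, so that `K[x,y,z] = K[u][v][t]`.
Then `X u = 0` and `X v = c(u)`, and local nilpotency forces `X t = F(u,v)` to be free of `t`:
otherwise the `t`-degree never drops along the iterates of `X` on `t`. With `∂_v Γ = F`, the
element `c(u) t - Γ(u,v)` lies in `ker X = K[u,p]`, and comparing `t`-degrees shows
`p = a(u) t + A(u,v)` with `c = a r`. Now `X p = 0` gives `X t = -r(u) ∂_v A(u,v)`, so `r(u)`
divides `X` on `u, v, t`, hence on all of `K[x,y,z]`; irreducibility makes `r` a nonzero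
constant, and `w = r⁻¹ t`, `Q = -A` do the job.
-/

open Polynomial

theorem RingHom.injective_of_surjective_of_isNoetherianRing {R : Type*} [CommRing R]
    [IsNoetherianRing R] (f : R →+* R) (hf : Function.Surjective f) : Function.Injective f := by
  have hmono : Monotone fun n : ℕ => RingHom.ker (f ^ n) :=
    monotone_nat_of_le_succ fun n a ha => by
      rw [RingHom.mem_ker] at ha ⊢
      rw [pow_succ', RingHom.mul_def, RingHom.comp_apply, ha, map_zero]
  obtain ⟨N, hN⟩ := monotone_stabilizes_iff_noetherian.mpr
    (isNoetherianRing_iff.mp ‹_›) ⟨_, hmono⟩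
  refine (injective_iff_map_eq_zero f).mpr fun a ha => ?_
  obtain ⟨b, rfl⟩ := (RingHom.coe_pow f N ▸ hf.iterate N : Function.Surjective ⇑(f ^ N)) a
  have hb : b ∈ RingHom.ker (f ^ (N + 1)) := by
    rwa [RingHom.mem_ker, pow_succ', RingHom.mul_def, RingHom.comp_apply]
  rwa [← RingHom.mem_ker, show RingHom.ker (f ^ N) = RingHom.ker (f ^ (N + 1)) from hN _ N.le_succ]

theorem Polynomial.exists_derivative_eq {R : Type*} [CommRing R] [Algebra ℚ R] (f : R[X]) :
    ∃ g : R[X], derivative g = f := by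
  induction f using Polynomial.induction_on' with
  | add p q hp hq =>
    obtain ⟨g, rfl⟩ := hp
    obtain ⟨h, rfl⟩ := hq
    exact ⟨g + h, derivative_add⟩
  | monomial n a =>
    refine ⟨monomial (n + 1) (((n + 1 : ℕ) : ℚ)⁻¹ • a), ?_⟩
    rw [derivative_monomial, Nat.add_sub_cancel, Algebra.smul_def, mul_right_comm,
      ← map_natCast (algebraMap ℚ R), ← map_mul, inv_mul_cancel₀ (by positivity), map_one, one_mul]

theorem Polynomial.mul_add_C_mul_derivative_ne_zero {R : Type*} [CommRing R] [IsDomain R]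
    [CharZero R] {L m : R[X]} (hL : L ≠ 0) (hm : m ≠ 0) (c : R) :
    L * m + C c * derivative L ≠ 0 := by
  by_cases hL0 : L.natDegree = 0
  · rw [eq_C_of_natDegree_eq_zero hL0, derivative_C, mul_zero, add_zero]
    exact mul_ne_zero (by rwa [← eq_C_of_natDegree_eq_zero hL0]) hm
  have hlt : (C c * derivative L).natDegree < (L * m).natDegree := calc
    (C c * derivative L).natDegree ≤ (derivative L).natDegree := natDegree_C_mul_le c _
    _ < L.natDegree := natDegree_derivative_lt hL0
    _ ≤ (L * m).natDegree := by rw [natDegree_mul hL hm]; omega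
  intro h
  rw [eq_neg_of_add_eq_zero_left h, natDegree_neg] at hlt
  exact hlt.false

theorem Derivation.dvd_apply_of_adjoin_eq_top {k A : Type*} [CommRing k] [CommRing A]
    [Algebra k A] (D : Derivation k A A) {s : Set A} (hs : Algebra.adjoin k s = ⊤) {d : A}
    (hd : ∀ a ∈ s, d ∣ D a) (a : A) : d ∣ D a := by
  have ha : a ∈ Algebra.adjoin k s := hs ▸ Algebra.mem_top
  induction ha using Algebra.adjoin_induction with
  | mem x hx => exact hd x hx
  | algebraMap r => simp
  | add x y _ _ hx hy => rw [map_add]; exact dvd_add hx hy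
  | mul x y _ _ hx hy =>
    rw [Derivation.leibniz, smul_eq_mul, smul_eq_mul]
    exact dvd_add (dvd_mul_of_dvd_right hy x) (dvd_mul_of_dvd_right hx y)

theorem Derivation.apply_eq_zero_of_setOf_eq_adjoin {k A : Type*} [CommRing k] [CommRing A]
    [Algebra k A] {D : Derivation k A A} {s : Set A}
    (hker : {a : A | D a = 0} = (Algebra.adjoin k s : Subalgebra k A)) {a : A} (ha : a ∈ s) :
    D a = 0 := by
  have h : a ∈ {a : A | D a = 0} := hker ▸ Algebra.subset_adjoin ha
  exact h

def Derivation.conj {k A B : Type*} [CommRing k] [CommRing A] [CommRing B] [Algebra k A]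
    [Algebra k B] (e : A ≃ₐ[k] B) (D : Derivation k B B) : Derivation k A A where
  toLinearMap := e.symm.toLinearMap ∘ₗ D.toLinearMap ∘ₗ e.toLinearMap
  map_one_eq_zero' := by simp
  leibniz' a b := by simp

theorem Derivation.conj_apply {k A B : Type*} [CommRing k] [CommRing A] [CommRing B]
    [Algebra k A] [Algebra k B] (e : A ≃ₐ[k] B) (D : Derivation k B B) (a : A) :
    D.conj e a = e.symm (D (e a)) := rfl

theorem Derivation.conj_iterate {k A B : Type*} [CommRing k] [CommRing A] [CommRing B]
    [Algebra k A] [Algebra k B] (e : A ≃ₐ[k] B) (D : Derivation k B B) (n : ℕ) (a : A) :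
    (⇑(D.conj e))^[n] a = e.symm ((⇑D)^[n] (e a)) := by
  induction n generalizing a with
  | zero => simp
  | succ n ih => simp [ih, Derivation.conj_apply]

namespace Polynomial

section TwoVariables

variable {k R : Type*} [CommRing k] [CommRing R] [Algebra k R]
  (D : Derivation k R[X][X] R[X][X]) {c : R}
  (hR : ∀ r : R, D (C (C r)) = 0) (hy : D (C X) = C (C c))
include hR hy

theorem derivation_C_eq (s : R[X]) : D (C s) = C (C c * derivative s) := by
  induction s using Polynomial.induction_on' with
  | add p q hp hq => rw [C_add, map_add, hp, hq, derivative_add, mul_add, C_add]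
  | monomial n r =>
    rw [← C_mul_X_pow_eq_monomial, C_mul, C_pow, Derivation.leibniz, Derivation.leibniz_pow, hy,
      hR, derivative_C_mul_X_pow]
    simp only [smul_eq_mul, nsmul_eq_mul, mul_zero, add_zero, map_mul, map_pow, map_natCast]
    ring

theorem coeff_derivation (g : R[X][X]) (n : ℕ) :
    (D g).coeff n = (derivative g * D X).coeff n + C c * derivative (g.coeff n) := by
  induction g using Polynomial.induction_on' with
  | add p q hp hq => simp only [map_add, coeff_add, hp, hq, add_mul]; ring
  | monomial m s =>
    have hD : D (C s * X ^ m) =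
        derivative (C s * X ^ m) * D X + C (C c * derivative s) * X ^ m := by
      rw [Derivation.leibniz, Derivation.leibniz_pow, derivation_C_eq D hR hy,
        derivative_C_mul_X_pow]
      simp only [smul_eq_mul, nsmul_eq_mul, map_mul, map_natCast]
      ring
    rw [← C_mul_X_pow_eq_monomial, hD, coeff_add, coeff_C_mul_X_pow, coeff_C_mul_X_pow]
    split_ifs <;> simp

variable [IsDomain R] [CharZero R]

theorem natDegree_le_natDegree_derivation (he : 1 ≤ (D X).natDegree) {g : R[X][X]}
    (hg : 1 ≤ g.natDegree) : g.natDegree ≤ (D g).natDegree := by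
  set N := g.natDegree + ((D X).natDegree - 1)
  have hg0 : g ≠ 0 := by rintro rfl; simp at hg
  have hDX0 : D X ≠ 0 := by intro h; simp [h] at he
  have hN : N = (derivative g).natDegree + (D X).natDegree := by
    rw [natDegree_derivative]; omega
  have hcoeff : (D g).coeff N = g.leadingCoeff * (g.natDegree * (D X).leadingCoeff) +
      C c * derivative (g.coeff N) := by
    rw [coeff_derivation D hR hy, hN, coeff_mul_degree_add_degree, leadingCoeff_derivative,
      ← hN, mul_assoc]
  have hm : (g.natDegree : R[X]) * (D X).leadingCoeff ≠ 0 :=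
    mul_ne_zero (by exact_mod_cast (by omega : g.natDegree ≠ 0)) (leadingCoeff_ne_zero.mpr hDX0)
  have hne : (D g).coeff N ≠ 0 := by
    rw [hcoeff]
    -- for `deg D X = 1` no cancellation is possible either, since `∂_y` lowers the `y`-degree
    rcases (by omega : (D X).natDegree = 1 ∨ g.natDegree < N) with he1 | hlt
    · rw [show N = g.natDegree by omega, ← leadingCoeff]
      exact mul_add_C_mul_derivative_ne_zero (leadingCoeff_ne_zero.mpr hg0) hm c
    · rw [coeff_eq_zero_of_natDegree_lt hlt, derivative_zero, mul_zero, add_zero]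
      exact mul_ne_zero (leadingCoeff_ne_zero.mpr hg0) hm
  exact (Nat.le_add_right _ _).trans (le_natDegree_of_ne_zero hne)

theorem exists_derivation_X_eq_C (hnil : ∃ n, (⇑D)^[n] X = 0) : ∃ F : R[X], D X = C F := by
  refine ⟨(D X).coeff 0, eq_C_of_natDegree_eq_zero ?_⟩
  by_contra he
  obtain ⟨n, hn⟩ := hnil
  have hdeg : ∀ n, 1 ≤ ((⇑D)^[n] X).natDegree := by
    intro n
    induction n with
    | zero => simp
    | succ n ih =>
      rw [Function.iterate_succ_apply']
      exact ih.trans (natDegree_le_natDegree_derivation D hR hy (by omega) ih)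
  simpa [hn] using hdeg n

end TwoVariables

theorem algebraMap_eq_C_C {R : Type*} [CommSemiring R] (r : R) :
    algebraMap R R[X][X] r = C (C r) := by
  simp [Polynomial.algebraMap_apply]

theorem exists_eq_C_C_mul_X_add_C_of_aeval_eq {R : Type*} [CommRing R] [IsDomain R]
    {P : R[X][X]} {W : R[X]} {c : R} {g : R[X]} (hc : c ≠ 0)
    (h : aeval P W = C (C c) * X + C g) :
    ∃ a A, a ∣ c ∧ P = C (C a) * X + C A := by
  have hcomp : aeval P W = (W.map C).comp P := by rw [comp, eval₂_map]; rfl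
  have hdeg : W.natDegree * P.natDegree = 1 := by
    rw [← natDegree_map_eq_of_injective C_injective W, ← natDegree_comp, ← hcomp, h,
      natDegree_linear (C_ne_zero.mpr hc)]
  obtain ⟨hW, hP⟩ := mul_eq_one.mp hdeg
  have hP1 := eq_X_add_C_of_natDegree_le_one hP.le
  have hlin : C c = C (W.coeff 1) * P.coeff 1 := by
    have := congrArg (coeff · 1) h
    rw [eq_X_add_C_of_natDegree_le_one hW.le, hP1] at this
    simpa [coeff_X, coeff_C] using this.symm
  have hW0 : W.coeff 1 ≠ 0 := by rintro h0; simp [h0, hc] at hlin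
  obtain ⟨a, ha⟩ : ∃ a, P.coeff 1 = C a := ⟨_, eq_C_of_natDegree_eq_zero <| by
    rw [← natDegree_C_mul hW0, ← hlin, natDegree_C]⟩
  have hc : c = W.coeff 1 * a := C_injective (by rw [hlin, ha, C_mul])
  exact ⟨a, P.coeff 0, Dvd.intro_left _ hc.symm, by rwa [← ha]⟩

end Polynomial

section Coordinates

variable {K : Type} [Field K]

/-- `K[X][X][X]` is read as `K[x][y][z]`, with `x ↦ u`, `y ↦ v`, `z ↦ t`. -/
def tripleEval (u v t : PolyR K) : K[X][X][X] →ₐ[K] PolyR K :=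
  eval₂AlgHom (eval₂AlgHom (aeval u) v fun _ => Commute.all _ _) t fun _ => Commute.all _ _

variable {u v t : PolyR K}

@[simp] theorem tripleEval_X : tripleEval u v t X = t := by simp [tripleEval]

@[simp] theorem tripleEval_C (s : K[X][X]) : tripleEval u v t (C s) = ev2 K u v s := by
  simp [tripleEval, ev2]

@[simp] theorem ev2_X : ev2 K u t X = t := by
  simp [ev2]

@[simp] theorem ev2_neg (Q : K[X][X]) : ev2 K u t (-Q) = -ev2 K u t Q := by
  simp [ev2]

@[simp] theorem ev2_C (r : K[X]) : ev2 K u t (C r) = aeval u r := by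
  simp [ev2]

theorem tripleEval_surjective (hadj : Algebra.adjoin K {u, v, t} = ⊤) :
    Function.Surjective (tripleEval u v t) := by
  rw [← AlgHom.range_eq_top, eq_top_iff, ← hadj, Algebra.adjoin_le_iff]
  rintro a (rfl | rfl | rfl)
  · exact ⟨C (C X), by simp⟩
  · exact ⟨C X, by simp⟩
  · exact ⟨X, by simp⟩

theorem tripleEval_injective (hadj : Algebra.adjoin K {u, v, t} = ⊤) :
    Function.Injective (tripleEval u v t) := by
  let e : PolyR K ≃ₐ[K] K[X][X][X] :=
    (MvPolynomial.finSuccEquiv K 2).trans <| mapAlgEquiv <|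
      (MvPolynomial.finSuccEquiv K 1).trans <| mapAlgEquiv <|
        (MvPolynomial.finSuccEquiv K 0).trans <| mapAlgEquiv <|
          MvPolynomial.isEmptyAlgEquiv K (Fin 0)
  have hinj := ((tripleEval u v t).comp e.toAlgHom : PolyR K →+* PolyR K)
    |>.injective_of_surjective_of_isNoetherianRing
      ((tripleEval_surjective hadj).comp e.surjective)
  intro a b hab
  exact e.symm.injective (hinj (by simpa using hab))

def tripleEquiv (hadj : Algebra.adjoin K {u, v, t} = ⊤) : K[X][X][X] ≃ₐ[K] PolyR K :=
  AlgEquiv.ofBijective (tripleEval u v t) ⟨tripleEval_injective hadj, tripleEval_surjective hadj⟩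

@[simp] theorem tripleEquiv_apply (hadj : Algebra.adjoin K {u, v, t} = ⊤) (a : K[X][X][X]) :
    tripleEquiv hadj a = tripleEval u v t a := rfl

theorem Derivation.map_ev2 (D : Derivation K (PolyR K) (PolyR K)) (hu : D u = 0) (Q : K[X][X]) :
    D (ev2 K u t Q) = ev2 K u t (derivative Q) * D t := by
  induction Q using Polynomial.induction_on' with
  | add p q hp hq => simp only [ev2, eval₂_add, map_add] at *; rw [hp, hq]; ring
  | monomial n s =>
    simp only [ev2, eval₂_monomial, derivative_monomial, map_mul, Derivation.leibniz,
      Derivation.leibniz_pow, AlgHom.toRingHom_eq_coe, RingHom.coe_coe, Derivation.map_aeval, hu]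
    simp only [smul_eq_mul, nsmul_eq_mul, _root_.map_natCast]
    ring

theorem LND.exists_apply_eq_ev2 [CharZero K] {D : Derivation K (PolyR K) (PolyR K)} (hln : LND K D)
    (hadj : Algebra.adjoin K {u, v, t} = ⊤) {c : K[X]} (hu : D u = 0) (hv : D v = aeval u c) :
    ∃ F : K[X][X], D t = ev2 K u v F := by
  set ψ := tripleEquiv hadj
  obtain ⟨F, hF⟩ := exists_derivation_X_eq_C (D.conj ψ) (c := c)
    (fun r => by simp [Derivation.conj_apply, ψ, hu])
    (by simp [Derivation.conj_apply, ψ, ev2, hv, AlgEquiv.symm_apply_eq])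
    (by obtain ⟨n, -, hn⟩ := hln t; exact ⟨n, by simp [Derivation.conj_iterate, ψ, hn]⟩)
  refine ⟨F, ?_⟩
  simpa [Derivation.conj_apply, ψ, AlgEquiv.symm_apply_eq] using hF

theorem exists_eq_aeval_mul_add_ev2 {D : Derivation K (PolyR K) (PolyR K)} {p : PolyR K}
    (hadj : Algebra.adjoin K {u, v, t} = ⊤)
    (hker : {a : PolyR K | D a = 0} = (Algebra.adjoin K {u, p} : Subalgebra K (PolyR K)))
    {c : K[X]} (hc : c ≠ 0) {Γ : K[X][X]} (hκ : D (aeval u c * t + ev2 K u v Γ) = 0) :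
    ∃ (a : K[X]) (A : K[X][X]), a ∣ c ∧ p = aeval u a * t + ev2 K u v A := by
  set ψ := tripleEquiv hadj
  set P := ψ.symm p
  have hψ : ψ (C (C c) * X + C Γ) = aeval u c * t + ev2 K u v Γ := by simp [ψ]
  have hmem : C (C c) * X + C Γ ∈ (Algebra.adjoin K {C (C X), P}) := by
    have h : aeval u c * t + ev2 K u v Γ ∈ Algebra.adjoin K {u, p} := by
      rw [← SetLike.mem_coe, ← hker]; exact hκ
    have hmap : (Algebra.adjoin K {u, p}).map (ψ.symm : PolyR K →ₐ[K] K[X][X][X]) =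
        Algebra.adjoin K {C (C X), P} := by
      have hu : ψ.symm u = C (C X) := by simp [AlgEquiv.symm_apply_eq, ψ]
      rw [AlgHom.map_adjoin, Set.image_pair, AlgEquiv.coe_toAlgHom, hu]
    rw [← hψ] at h
    rw [← hmap]
    exact ⟨_, h, ψ.symm_apply_apply _⟩
  have hle : Algebra.adjoin K {C (C X), P} ≤ (Algebra.adjoin K[X] {P}).restrictScalars K := by
    rw [Algebra.adjoin_le_iff, Set.insert_subset_iff, Set.singleton_subset_iff, SetLike.mem_coe,
      SetLike.mem_coe, Subalgebra.mem_restrictScalars, Subalgebra.mem_restrictScalars,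
      ← algebraMap_eq_C_C]
    exact ⟨Subalgebra.algebraMap_mem _ _, Algebra.self_mem_adjoin_singleton K[X] P⟩
  obtain ⟨W, hW⟩ : C (C c) * X + C Γ ∈ (aeval P).range := by
    rw [← Algebra.adjoin_singleton_eq_range_aeval K[X] P]; exact hle hmem
  obtain ⟨a, A, ha, hP⟩ := exists_eq_C_C_mul_X_add_C_of_aeval_eq hc hW
  refine ⟨a, A, ha, ?_⟩
  rw [← ψ.apply_symm_apply p]
  simp [ψ, P, hP]

theorem IrredDer.isUnit_of_dvd {D : Derivation K (PolyR K) (PolyR K)} (hirr : IrredDer K D)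
    {s : Set (PolyR K)} (hs : Algebra.adjoin K s = ⊤) {d : PolyR K} (hd : ∀ a ∈ s, d ∣ D a) :
    IsUnit d :=
  hirr d fun _ => D.dvd_apply_of_adjoin_eq_top hs hd _

theorem isUnit_of_isUnit_aeval (hadj : Algebra.adjoin K {u, v, t} = ⊤) {r : K[X]}
    (h : IsUnit (aeval u r)) : IsUnit r := by
  have hψ : (tripleEquiv hadj).symm (aeval u r) = C (C r) := by simp [AlgEquiv.symm_apply_eq]
  exact isUnit_C.mp <| isUnit_C.mp <| hψ ▸ h.map (tripleEquiv hadj).symm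

theorem adjoin_insert_insert_smul_eq_top (hadj : Algebra.adjoin K {u, v, t} = ⊤) {μ : K}
    (hμ : μ ≠ 0) : Algebra.adjoin K {u, v, μ • t} = ⊤ := by
  rw [eq_top_iff, ← hadj, Algebra.adjoin_le_iff]
  rintro a (rfl | rfl | rfl)
  · exact Algebra.subset_adjoin (by simp)
  · exact Algebra.subset_adjoin (by simp)
  · have h : μ • a ∈ Algebra.adjoin K {u, v, μ • a} := Algebra.subset_adjoin (by simp)
    simpa [inv_smul_smul₀ hμ] using Subalgebra.smul_mem _ h μ⁻¹

theorem ev2_mem_adjoin (Q : K[X][X]) : ev2 K u v Q ∈ Algebra.adjoin K {u, v} := by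
  induction Q using Polynomial.induction_on' with
  | add p q hp hq => simpa [ev2] using add_mem hp hq
  | monomial n s =>
    rw [ev2, eval₂_monomial]
    exact mul_mem (Algebra.adjoin_mono (by simp) (aeval_mem_adjoin_singleton K u))
      (pow_mem (Algebra.subset_adjoin (by simp)) n)

theorem apply_eq_of_eq_aeval_mul_add_ev2 {D : Derivation K (PolyR K) (PolyR K)} {p w : PolyR K}
    (hu : D u = 0) (hp : D p = 0) {a r : K[X]} (ha : aeval u a ≠ 0)
    (hv : D v = aeval u a * aeval u r) {A : K[X][X]} (h : p = aeval u a * w + ev2 K u v A) :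
    D w = aeval u r * -ev2 K u v (derivative A) := by
  apply mul_left_cancel₀ ha
  have := congrArg D h
  rw [hp, map_add, Derivation.leibniz, D.map_ev2 hu, Derivation.map_aeval, hu, hv] at this
  simp only [smul_eq_mul, mul_zero, add_zero] at this
  linear_combination -this

theorem exists_isCoordSys_eq_aeval_mul_add_ev2 [CharZero K] {D : Derivation K (PolyR K) (PolyR K)}
    (hln : LND K D) (hirr : IrredDer K D) (hadj : Algebra.adjoin K {u, v, t} = ⊤) {p : PolyR K}
    (hker : {a : PolyR K | D a = 0} = (Algebra.adjoin K {u, p} : Subalgebra K (PolyR K)))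
    {c : K[X]} (hv : D v = aeval u c) (hc : aeval u c ≠ 0) :
    ∃ (w : PolyR K) (A : K[X][X]), IsCoordSys K u v w ∧ p = aeval u c * w + ev2 K u v A := by
  have hu : D u = 0 := Derivation.apply_eq_zero_of_setOf_eq_adjoin hker (by simp)
  have hp : D p = 0 := Derivation.apply_eq_zero_of_setOf_eq_adjoin hker (by simp)
  obtain ⟨F, hF⟩ := hln.exists_apply_eq_ev2 hadj hu hv
  obtain ⟨Γ, hΓ⟩ := exists_derivative_eq F
  have hκ : D (aeval u c * t + ev2 K u v (-Γ)) = 0 := by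
    rw [map_add, Derivation.leibniz, D.map_ev2 hu, Derivation.map_aeval, hu, hF, hv,
      derivative_neg, hΓ]
    simp only [smul_eq_mul, ev2_neg]
    ring
  obtain ⟨a, A, ⟨r, rfl⟩, hpA⟩ :=
    exists_eq_aeval_mul_add_ev2 hadj hker (fun h => hc (by simp [h])) hκ
  rw [map_mul] at hc hv
  have ht := apply_eq_of_eq_aeval_mul_add_ev2 hu hp (left_ne_zero_of_mul hc) hv hpA
  obtain ⟨μ, hμ, rfl⟩ := isUnit_iff.mp <| isUnit_of_isUnit_aeval (r := r) hadj <|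
    hirr.isUnit_of_dvd hadj <| by
      simp only [Set.mem_insert_iff, Set.mem_singleton_iff, forall_eq_or_imp, forall_eq]
      exact ⟨by simp [hu], hv ▸ dvd_mul_left _ _, ht ▸ dvd_mul_right _ _⟩
  refine ⟨μ⁻¹ • t, A, adjoin_insert_insert_smul_eq_top hadj (inv_ne_zero hμ.ne_zero), ?_⟩
  rw [hpA, map_mul, aeval_C, Algebra.smul_def, mul_assoc, ← mul_assoc (algebraMap K _ μ),
    ← map_mul, mul_inv_cancel₀ hμ.ne_zero, map_one, one_mul]

end Coordinates

theorem coordinate_pair_gives_triangular_form_general {K : Type} [Field K] [CharZero K]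
    (X : Derivation K (PolyR K) (PolyR K))
    (hln : LND K X) (hirr : IrredDer K X)
    (u p : PolyR K)
    (hker : {a : PolyR K | X a = 0} = (Algebra.adjoin K {u, p} : Subalgebra K (PolyR K)))
    (s : PolyR K) (hs : IsMinLocalSlice K X s)
    (c : Polynomial K) (hc : X s = Polynomial.aeval u c)
    (ℓ : Polynomial (Polynomial K))
    (hsys : IsSysOfCoords2 K u (s + ev2 K u p ℓ)) :
    ∃ (w : PolyR K) (Q : Polynomial (Polynomial K)),
      p + ev2 K u (s + ev2 K u p ℓ) Q = Polynomial.aeval u c * w ∧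
      IsCoordSys K u (s + ev2 K u p ℓ) w ∧
      X u = 0 ∧ X (s + ev2 K u p ℓ) = Polynomial.aeval u c ∧
      X w = ev2 K u (s + ev2 K u p ℓ) (Polynomial.derivative Q) ∧
      Triangulable K X := by
  obtain ⟨t, hadj⟩ := hsys
  have hXu : X u = 0 := Derivation.apply_eq_zero_of_setOf_eq_adjoin hker (by simp)
  have hXp : X p = 0 := Derivation.apply_eq_zero_of_setOf_eq_adjoin hker (by simp)
  have hXv : X (s + ev2 K u p ℓ) = aeval u c := by
    rw [map_add, X.map_ev2 hXu, hXp, mul_zero, add_zero, hc]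
  have hc0 : aeval u c ≠ 0 := hc ▸ hs.1.1
  obtain ⟨w, A, hcoord, hpA⟩ := exists_isCoordSys_eq_aeval_mul_add_ev2 hln hirr hadj hker hXv hc0
  have hXw : X w = ev2 K u (s + ev2 K u p ℓ) (derivative (-A)) := by
    rw [apply_eq_of_eq_aeval_mul_add_ev2 (r := 1) hXu hXp hc0 (by rw [map_one, mul_one, hXv]) hpA]
    rw [map_one, one_mul, derivative_neg, ev2_neg]
  refine ⟨w, -A, by rw [ev2_neg]; linear_combination hpA, hcoord, hXu, hXv, hXw,
    u, _, w, hcoord, by simp [hXu], hXv ▸ aeval_mem_adjoin_singleton K u, hXw ▸ ev2_mem_adjoin _⟩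

/-- If `v = s + ℓ(u,p)` extends (with `u`) to a coordinate system, then there are `w`
and `Q` with `p + Q(u,v) = c(u)·w`, `u,v,w` a coordinate system, `X u = 0`,
`X v = c(u)`, `X w = ∂_v Q(u,v)`; in particular `X` is triangulable. -/
theorem coordinate_pair_gives_triangular_form {K : Type} [Field K] [CharZero K]
    (X : Derivation K (PolyR K) (PolyR K))
    (hln : LND K X) (hirr : IrredDer K X) (hrk : rankD K X = 2)
    (u p : PolyR K) (hu : IsCoord K u)
    (hker : {a : PolyR K | X a = 0} = (Algebra.adjoin K {u, p} : Subalgebra K (PolyR K)))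
    (s : PolyR K) (hs : IsMinLocalSlice K X s)
    (c : Polynomial K) (hc : X s = Polynomial.aeval u c)
    (ℓ : Polynomial (Polynomial K))
    (hsys : IsSysOfCoords2 K u (s + ev2 K u p ℓ)) :
    ∃ (w : PolyR K) (Q : Polynomial (Polynomial K)),
      p + ev2 K u (s + ev2 K u p ℓ) Q = Polynomial.aeval u c * w ∧
      IsCoordSys K u (s + ev2 K u p ℓ) w ∧
      X u = 0 ∧ X (s + ev2 K u p ℓ) = Polynomial.aeval u c ∧
      X w = ev2 K u (s + ev2 K u p ℓ) (Polynomial.derivative Q) ∧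
      Triangulable K X :=
  coordinate_pair_gives_triangular_form_general X hln hirr u p hker s hs c hc ℓ hsys
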